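/- arXiv:2509.23403 — 5 statements merged into one kernel-verified Lean document; each statement's English description precedes it below -/
import Mathlib

section
/- The unital k-algebra homomorphism m : C(V,Q) → End_k(∧U), obtained by applying the universal property of the Clifford algebra to the map v ↦ m_v, is an isomorphism of k-algebras. -/
/-!
Once 2 is invertible, `C(V,Q)` is isomorphic to `∧V` as a vector space, so it has dimension
`2^(2N) = dim End_k(∧U)` and it suffices to show that `m` is surjective, i.e. that the creation
operators `w ∧ ·` and the contractions `θ⌟·` generate `End_k(∧U)`. Take a basis `eᵢ` of `U`, the
monomial basis `e_S` of `∧U`, and let `∂_T` be the product of the contractions by the dual basis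
vectors `eᵢ*`, `i ∈ T`. Then `∂_T e_R` vanishes unless `T ⊆ R`, where it is `±e_{R∖T}`, and this
is killed by `e_univ ∧ ·` unless `R = T`. Hence `e_S ∧ ∂_univ (e_univ ∧ ∂_T ·)` sends `e_T` to
`±e_S` and every other `e_R` to `0`, so every matrix unit lies in the image of `m`.
-/

open Module

noncomputable def auxBilin (k : Type*) [Field k] (U : Type*) [AddCommGroup U] [Module k U] :
    (U × Module.Dual k U) →ₗ[k] (U × Module.Dual k U) →ₗ[k] k :=
  LinearMap.mk₂ k (fun v w => v.2 w.1)
    (fun v v' w => by simp)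
    (fun c v w => by simp)
    (fun v w w' => by simp)
    (fun c v w => by simp)

/-- The quadratic form `Q(w,θ) := θ(w)` on `V = U × U*`. -/
noncomputable def hypQ (k : Type*) [Field k] (U : Type*) [AddCommGroup U] [Module k U] :
    QuadraticForm k (U × Module.Dual k U) :=
  LinearMap.BilinMap.toQuadraticMap (auxBilin k U)

/-- The operator `m_v : ∧U → ∧U`, `α ↦ w ∧ α + θ⌟α`, for `v = (w,θ) ∈ V = U × U*`. -/
noncomputable def mOp (k : Type*) [Field k] (U : Type*) [AddCommGroup U] [Module k U]
    (v : U × Module.Dual k U) : Module.End k (ExteriorAlgebra k U) :=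
  LinearMap.mulLeft k (ExteriorAlgebra.ι k v.1)
    + CliffordAlgebra.contractLeft (Q := (0 : QuadraticForm k U)) v.2

namespace ExteriorAlgebra

open CliffordAlgebra

variable {R M : Type*} [CommRing R] [AddCommGroup M] [Module R M]

lemma contractLeft_prod_ι_eq_zero (d : Dual R M) {l : List M} (hl : ∀ m ∈ l, d m = 0) :
    contractLeft (Q := 0) d (l.map (ι R)).prod = 0 := by
  induction l with
  | nil => simp
  | cons m l ih =>
    rw [List.map_cons, List.prod_cons, contractLeft_ι_mul, hl m List.mem_cons_self,
      ih fun m' hm' => hl m' (List.mem_cons_of_mem m hm'), zero_smul, mul_zero, sub_zero]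

section Basis

open Set.powersetCard

variable {I : Type*} [LinearOrder I] (b : Basis I R M)

lemma exists_list_basis_eq_prod (S : Finset I) :
    ∃ l : List I, (∀ j ∈ l, j ∈ S) ∧ b.ExteriorAlgebra S = (l.map fun j => ι R (b j)).prod := by
  refine ⟨List.ofFn (ofFinEmbEquiv.symm (ofCard (rfl : S.card = S.card))), ?_, ?_⟩
  · intro j hj
    obtain ⟨a, rfl⟩ := List.mem_ofFn.mp hj
    exact (mem_range_ofFinEmbEquiv_symm_iff_mem _ _).mp ⟨a, rfl⟩
  · rw [basis_apply_ofCard b rfl, ιMulti_family, ιMulti_apply, List.map_ofFn]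
    rfl

lemma basis_empty : b.ExteriorAlgebra ∅ = 1 := by
  rw [basis_apply_ofCard b Finset.card_empty, ιMulti_family, ιMulti_zero_apply]

lemma basis_singleton (i : I) : b.ExteriorAlgebra {i} = ι R (b i) := by
  rw [basis_apply_ofCard b (Finset.card_singleton i), ιMulti_family, ιMulti_apply]
  have : ofFinEmbEquiv.symm (ofCard (Finset.card_singleton i)) 0 = i :=
    Finset.mem_singleton.mp ((mem_range_ofFinEmbEquiv_symm_iff_mem (ofCard _) _).mp ⟨0, rfl⟩)
  simp [this]

lemma basis_mul_eq_zero_of_not_disjoint {S T : Finset I} (h : ¬Disjoint S T) :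
    b.ExteriorAlgebra S * b.ExteriorAlgebra T = 0 :=
  basis_mul_of_not_disjoint b (ofCard rfl) (ofCard rfl) h

lemma exists_ι_mul_basis_eq_smul_insert {S : Finset I} {i : I} (h : i ∉ S) :
    ∃ σ : ℤˣ, ι R (b i) * b.ExteriorAlgebra S = σ • b.ExteriorAlgebra (insert i S) := by
  have hd : Disjoint ({i} : Finset I) S := Finset.disjoint_singleton_left.mpr h
  have := basis_mul_of_disjoint b (ofCard rfl) (ofCard rfl) hd
  rw [val_ofCard, val_ofCard, basis_singleton] at this
  exact ⟨_, this.trans (congrArg (_ • b.ExteriorAlgebra ·) (by ext; simp [disjUnion]))⟩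

lemma contractLeft_coord_basis_of_notMem {S : Finset I} {i : I} (h : i ∉ S) :
    contractLeft (Q := 0) (b.coord i) (b.ExteriorAlgebra S) = 0 := by
  obtain ⟨l, hl, hS⟩ := exists_list_basis_eq_prod b S
  rw [hS, show (fun j => ι R (b j)) = ι R ∘ b from rfl, ← List.map_map]
  refine contractLeft_prod_ι_eq_zero _ fun m hm => ?_
  obtain ⟨j, hj, rfl⟩ := List.mem_map.mp hm
  rw [Basis.coord_apply, Basis.repr_self, Finsupp.single_eq_of_ne]
  rintro rfl
  exact h (hl _ hj)

lemma exists_contractLeft_coord_basis_eq_smul_erase {S : Finset I} {i : I} (h : i ∈ S) :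
    ∃ σ : ℤˣ, contractLeft (Q := 0) (b.coord i) (b.ExteriorAlgebra S) =
      σ • b.ExteriorAlgebra (S.erase i) := by
  obtain ⟨σ, hσ⟩ := exists_ι_mul_basis_eq_smul_insert b (Finset.notMem_erase i S)
  rw [Finset.insert_erase h] at hσ
  have hS : b.ExteriorAlgebra S = σ • (ι R (b i) * b.ExteriorAlgebra (S.erase i)) := by
    rw [hσ, smul_smul, Int.units_mul_self, one_smul]
  refine ⟨σ, ?_⟩
  rw [hS, LinearMap.map_smul_of_tower, contractLeft_ι_mul,
    contractLeft_coord_basis_of_notMem b (Finset.notMem_erase i S), Basis.coord_apply,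
    Basis.repr_self, Finsupp.single_eq_same, one_smul, mul_zero, sub_zero]

lemma exists_prod_contractLeft_coord_basis {l : List I} (hl : l.Nodup) (T : Finset I) :
    ∃ σ : ℤˣ, (l.map fun i => contractLeft (Q := 0) (b.coord i)).prod (b.ExteriorAlgebra T) =
      if l.toFinset ⊆ T then σ • b.ExteriorAlgebra (T \ l.toFinset) else 0 := by
  induction l with
  | nil => exact ⟨1, by simp⟩
  | cons i l ih =>
    obtain ⟨hil, hl⟩ := List.nodup_cons.mp hl
    obtain ⟨σ, hσ⟩ := ih hl
    rw [List.map_cons, List.prod_cons, Module.End.mul_apply, hσ]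
    by_cases hlT : l.toFinset ⊆ T
    · rw [if_pos hlT, LinearMap.map_smul_of_tower]
      by_cases hiT : i ∈ T
      · have hi : i ∈ T \ l.toFinset := Finset.mem_sdiff.mpr ⟨hiT, by simpa using hil⟩
        obtain ⟨τ, hτ⟩ := exists_contractLeft_coord_basis_eq_smul_erase b hi
        refine ⟨σ * τ, ?_⟩
        rw [hτ, smul_smul, if_pos (by simpa [Finset.insert_subset_iff] using ⟨hiT, hlT⟩),
          List.toFinset_cons, Finset.sdiff_insert]
      · refine ⟨1, ?_⟩
        rw [contractLeft_coord_basis_of_notMem b fun hi => hiT (Finset.mem_sdiff.mp hi).1,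
          smul_zero, if_neg fun h => hiT (h (by simp))]
    · refine ⟨1, ?_⟩
      rw [if_neg hlT, map_zero, if_neg fun h => hlT fun j hj => h (by simp_all)]

noncomputable def contractLeftProd (T : Finset I) : Module.End R (ExteriorAlgebra R M) :=
  (T.toList.map fun i => contractLeft (Q := 0) (b.coord i)).prod

lemma exists_contractLeftProd_basis (T T' : Finset I) :
    ∃ σ : ℤˣ, contractLeftProd b T (b.ExteriorAlgebra T') =
      if T ⊆ T' then σ • b.ExteriorAlgebra (T' \ T) else 0 := by
  simpa only [contractLeftProd, Finset.toList_toFinset] using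
    exists_prod_contractLeft_coord_basis b (Finset.nodup_toList T) T'

lemma exists_contractLeftProd_basis_self (T : Finset I) :
    ∃ σ : ℤˣ, contractLeftProd b T (b.ExteriorAlgebra T) = σ • 1 := by
  obtain ⟨σ, hσ⟩ := exists_contractLeftProd_basis b T T
  exact ⟨σ, by rw [hσ, if_pos subset_rfl, Finset.sdiff_self, basis_empty]⟩

lemma exists_mulLeft_contractLeftProd_eq_basis_linearMap [Fintype I] (S T : Finset I) :
    ∃ σ : ℤˣ, σ • (LinearMap.mulLeft R (b.ExteriorAlgebra S) * contractLeftProd b Finset.univ *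
      LinearMap.mulLeft R (b.ExteriorAlgebra Finset.univ) * contractLeftProd b T) =
      b.ExteriorAlgebra.linearMap b.ExteriorAlgebra (S, T) := by
  obtain ⟨σ, hσ⟩ := exists_contractLeftProd_basis_self b T
  obtain ⟨τ, hτ⟩ := exists_contractLeftProd_basis_self b Finset.univ
  refine ⟨σ * τ, b.ExteriorAlgebra.ext fun T' => ?_⟩
  rw [Basis.linearMap_apply_apply]
  simp only [LinearMap.smul_apply, Module.End.mul_apply, LinearMap.mulLeft_apply]
  obtain ⟨ρ, hρ⟩ := exists_contractLeftProd_basis b T T'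
  by_cases hT : T = T'
  · subst hT
    rw [if_pos rfl, hσ, mul_smul_comm, mul_one, LinearMap.map_smul_of_tower, hτ, smul_smul,
      mul_smul_comm, mul_one, smul_smul, mul_mul_mul_comm, Int.units_mul_self,
      Int.units_mul_self, one_mul, one_smul]
  · rw [if_neg hT, hρ]
    split_ifs with hTT'
    · rw [mul_smul_comm, basis_mul_eq_zero_of_not_disjoint, smul_zero, map_zero, mul_zero,
        smul_zero]
      obtain ⟨j, hj⟩ := Finset.sdiff_nonempty.mpr fun h => hT (Finset.Subset.antisymm hTT' h)
      exact Finset.not_disjoint_iff.mpr ⟨j, Finset.mem_univ j, hj⟩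
    · rw [mul_zero, map_zero, mul_zero, smul_zero]

end Basis

instance [Module.Free R M] [Module.Finite R M] : Module.Finite R (ExteriorAlgebra R M) :=
  .of_basis ((Module.Free.chooseBasis R M).reindex
    (Fintype.equivFin (Module.Free.ChooseBasisIndex R M))).ExteriorAlgebra

theorem finrank_eq_two_pow [StrongRankCondition R] [Module.Free R M] [Module.Finite R M] :
    finrank R (ExteriorAlgebra R M) = 2 ^ finrank R M := by
  rw [finrank_eq_card_basis (Module.finBasis R M).ExteriorAlgebra, Fintype.card_finset,
    Fintype.card_fin]

theorem adjoin_mulLeft_ι_union_contractLeft_eq_top [Module.Free R M] [Module.Finite R M] :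
    Algebra.adjoin R (Set.range (fun m : M => LinearMap.mulLeft R (ι R m)) ∪
      Set.range (fun d : Dual R M => contractLeft (Q := 0) d)) = ⊤ := by
  set A := Algebra.adjoin R (Set.range (fun m : M => LinearMap.mulLeft R (ι R m)) ∪
      Set.range (fun d : Dual R M => contractLeft (Q := 0) d))
  let b := (Module.Free.chooseBasis R M).reindex
    (Fintype.equivFin (Module.Free.ChooseBasisIndex R M))
  have hmulLeft (x : ExteriorAlgebra R M) : LinearMap.mulLeft R x ∈ A := by
    have : Algebra.adjoin R (Set.range (ι R (M := M))) ≤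
        A.comap (Algebra.lmul R (ExteriorAlgebra R M)) :=
      Algebra.adjoin_le fun _ ⟨m, hm⟩ => Algebra.subset_adjoin (Or.inl ⟨m, hm ▸ rfl⟩)
    exact (CliffordAlgebra.adjoin_range_ι (Q := (0 : QuadraticForm R M)) ▸ this) Algebra.mem_top
  have hcontract (T : Finset (Fin _)) : contractLeftProd b T ∈ A :=
    Subalgebra.list_prod_mem _ fun _ hf => by
      obtain ⟨i, -, rfl⟩ := List.mem_map.mp hf
      exact Algebra.subset_adjoin (Or.inr ⟨_, rfl⟩)
  have hunit (S T : Finset (Fin _)) :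
      b.ExteriorAlgebra.linearMap b.ExteriorAlgebra (S, T) ∈ A := by
    obtain ⟨σ, hσ⟩ := exists_mulLeft_contractLeftProd_eq_basis_linearMap b S T
    rw [← hσ, Units.smul_def]
    exact zsmul_mem (mul_mem (mul_mem (mul_mem (hmulLeft _) (hcontract _)) (hmulLeft _))
      (hcontract _)) _
  have hspan : Submodule.span R (Set.range (b.ExteriorAlgebra.linearMap b.ExteriorAlgebra)) ≤
      Subalgebra.toSubmodule A :=
    Submodule.span_le.mpr (by rintro _ ⟨⟨S, T⟩, rfl⟩; exact hunit S T)
  exact eq_top_iff.mpr fun f _ => hspan (Basis.mem_span _ f)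

end ExteriorAlgebra

/-- the unital `k`-algebra homomorphism `m : C(V,Q) → End_k(∧U)` obtained from
the universal property of the Clifford algebra applied to `v ↦ m_v` is an isomorphism of
`k`-algebras. -/
theorem stmt1 (k : Type*) [Field k] [CharZero k] (U : Type*) [AddCommGroup U] [Module k U]
    [FiniteDimensional k U]
    (φ : CliffordAlgebra (hypQ k U) →ₐ[k] Module.End k (ExteriorAlgebra k U))
    (hφ : ∀ v : U × Module.Dual k U, φ (CliffordAlgebra.ι (hypQ k U) v) = mOp k U v) :
    Function.Bijective φ := by
  have hrange : ⊤ ≤ φ.range := by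
    rw [← ExteriorAlgebra.adjoin_mulLeft_ι_union_contractLeft_eq_top]
    refine Algebra.adjoin_le ?_
    rintro _ (⟨u, rfl⟩ | ⟨θ, rfl⟩)
    · exact ⟨CliffordAlgebra.ι _ (u, 0), by simp [hφ, mOp]⟩
    · exact ⟨CliffordAlgebra.ι _ (0, θ), by simp [hφ, mOp]⟩
  have hsurj : Function.Surjective φ := fun _ => hrange Algebra.mem_top
  have : Invertible (2 : k) := invertibleOfNonzero two_ne_zero
  have : FiniteDimensional k (CliffordAlgebra (hypQ k U)) :=
    .equiv (CliffordAlgebra.equivExterior (hypQ k U)).symm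
  have hdim : finrank k (CliffordAlgebra (hypQ k U)) =
      finrank k (Module.End k (ExteriorAlgebra k U)) := by
    rw [(CliffordAlgebra.equivExterior _).finrank_eq, Module.finrank_linearMap,
      ExteriorAlgebra.finrank_eq_two_pow, ExteriorAlgebra.finrank_eq_two_pow, finrank_prod,
      Subspace.dual_finrank_eq, pow_add]
  exact ⟨(LinearMap.injective_iff_surjective_of_finrank_eq_finrank (f := φ.toLinearMap)
    hdim).mpr hsurj, hsurj⟩
end

section
/- Let u be an invertible element of the Clifford algebra C(V,Q) such that u·ι(v)·u⁻¹ ∈ ι(V) for all v ∈ V, where ι : V → C(V,Q) is the canonical embedding, and let ρ_u ∈ GL(V) be the induced linear automorphism determined by ι(ρ_u(v)) = u·ι(v)·u⁻¹. Then for every maximal isotropic subspace W ⊆ V, the operator m(u) ∈ End_k(∧U) maps the pure spinor line ℓ_W isomorphically onto ℓ_{ρ_u(W)}. -/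
open Module

/-- The pure spinor space `ℓ_W := {λ ∈ ∧U : m_v(λ) = 0 for all v ∈ W}`. -/
noncomputable def ellW (k : Type*) [Field k] (U : Type*) [AddCommGroup U] [Module k U]
    (W : Submodule k (U × Module.Dual k U)) : Submodule k (ExteriorAlgebra k U) :=
  ⨅ v ∈ W, LinearMap.ker (mOp k U v)

/-! `m(u)` is invertible and conjugates `m_v` into `m_{ρ_u v}`, so it carries the joint kernel
of the `m_v`, `v ∈ W`, onto the joint kernel of the `m_v`, `v ∈ ρ_u(W)`. -/

section

variable {R A M : Type*} [CommSemiring R] [Semiring A] [Algebra R A] [AddCommMonoid M] [Module R M]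
  (φ : A →ₐ[R] Module.End R M) (u : Aˣ)

theorem Submodule.map_algHom_units_eq_comap (p : Submodule R M) :
    p.map (φ u) = p.comap (φ ↑u⁻¹) :=
  Submodule.map_equiv_eq_comap_symm
    (LinearEquiv.ofLinearMap (φ u) (φ ↑u⁻¹)
      (by rw [← Module.End.mul_eq_comp, ← map_mul, u.mul_inv, map_one]; rfl)
      (by rw [← Module.End.mul_eq_comp, ← map_mul, u.inv_mul, map_one]; rfl)) p

theorem LinearMap.map_ker_algHom_units_eq_ker_conj (a : A) :
    (LinearMap.ker (φ a)).map (φ u) = LinearMap.ker (φ (u * a * ↑u⁻¹)) := by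
  have hinj : LinearMap.ker (φ u) = ⊥ := by
    refine LinearMap.ker_eq_bot_of_inverse (g := φ ↑u⁻¹) ?_
    rw [← Module.End.mul_eq_comp, ← map_mul, u.inv_mul, map_one]; rfl
  rw [Submodule.map_algHom_units_eq_comap, ← LinearMap.ker_comp, mul_assoc, map_mul, map_mul,
    Module.End.mul_eq_comp, LinearMap.ker_comp_of_ker_eq_bot _ hinj, Module.End.mul_eq_comp]

theorem Submodule.map_algHom_units_iInf_ker {V : Type*} [AddCommMonoid V] [Module R V]
    (f : V → A) (ρ : V ≃ₗ[R] V) (hρ : ∀ v, f (ρ v) = u * f v * ↑u⁻¹) (W : Submodule R V) :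
    (⨅ v ∈ W, LinearMap.ker (φ (f v))).map (φ u) =
      ⨅ v ∈ W.map (ρ : V →ₗ[R] V), LinearMap.ker (φ (f v)) := by
  calc (⨅ v ∈ W, LinearMap.ker (φ (f v))).map (φ u)
      = ⨅ v ∈ W, (LinearMap.ker (φ (f v))).map (φ u) := by
        simp only [Submodule.map_algHom_units_eq_comap, Submodule.comap_iInf]
    _ = ⨅ v ∈ W, LinearMap.ker (φ (f (ρ v))) := by
        simp only [LinearMap.map_ker_algHom_units_eq_ker_conj, hρ]
    _ = ⨅ v ∈ W.map (ρ : V →ₗ[R] V), LinearMap.ker (φ (f v)) := by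
        simp only [← SetLike.mem_coe, Submodule.map_coe, iInf_image, LinearEquiv.coe_coe]

end

theorem stmt5_general (k : Type*) [Field k] (U : Type*) [AddCommGroup U] [Module k U]
    (φ : CliffordAlgebra (hypQ k U) →ₐ[k] Module.End k (ExteriorAlgebra k U))
    (hφ : ∀ v : U × Module.Dual k U, φ (CliffordAlgebra.ι (hypQ k U) v) = mOp k U v)
    (u : (CliffordAlgebra (hypQ k U))ˣ)
    (ρ : (U × Module.Dual k U) ≃ₗ[k] (U × Module.Dual k U))
    (hρ : ∀ v : U × Module.Dual k U,
      CliffordAlgebra.ι (hypQ k U) (ρ v) =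
        (u : CliffordAlgebra (hypQ k U)) * CliffordAlgebra.ι (hypQ k U) v * ((u⁻¹ : _ˣ) : CliffordAlgebra (hypQ k U)))
    (W : Submodule k (U × Module.Dual k U)) :
    (ellW k U W).map (φ (u : CliffordAlgebra (hypQ k U)))
      = ellW k U (W.map (ρ : (U × Module.Dual k U) →ₗ[k] (U × Module.Dual k U))) := by
  simp only [ellW, ← hφ]
  exact Submodule.map_algHom_units_iInf_ker φ u _ ρ hρ W

/-- let `u` be an invertible element of `C(V,Q)` conjugating `ι(V)` into
itself, with induced linear automorphism `ρ` of `V` (so `ι(ρ v) = u·ι(v)·u⁻¹`), and let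
`m : C(V,Q) → End(∧U)` be the spin representation (`m(ι v) = m_v`).  Then for every maximal
isotropic `W ⊆ V`, the invertible operator `m(u)` maps `ℓ_W` onto `ℓ_{ρ(W)}`. -/
theorem stmt5 (k : Type*) [Field k] [CharZero k] (U : Type*) [AddCommGroup U] [Module k U]
    [FiniteDimensional k U]
    (φ : CliffordAlgebra (hypQ k U) →ₐ[k] Module.End k (ExteriorAlgebra k U))
    (hφ : ∀ v : U × Module.Dual k U, φ (CliffordAlgebra.ι (hypQ k U) v) = mOp k U v)
    (u : (CliffordAlgebra (hypQ k U))ˣ)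
    (ρ : (U × Module.Dual k U) ≃ₗ[k] (U × Module.Dual k U))
    (hρ : ∀ v : U × Module.Dual k U,
      CliffordAlgebra.ι (hypQ k U) (ρ v) =
        (u : CliffordAlgebra (hypQ k U)) * CliffordAlgebra.ι (hypQ k U) v * ((u⁻¹ : _ˣ) : CliffordAlgebra (hypQ k U)))
    (W : Submodule k (U × Module.Dual k U))
    (hiso : ∀ v ∈ W, ∀ w ∈ W, v.2 w.1 + w.2 v.1 = (0 : k))
    (hdim : Module.finrank k W = Module.finrank k U) :
    (ellW k U W).map (φ (u : CliffordAlgebra (hypQ k U)))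
      = ellW k U (W.map (ρ : (U × Module.Dual k U) →ₗ[k] (U × Module.Dual k U))) :=
  stmt5_general k U φ hφ u ρ hρ W
end

section
/- Let Θ ∈ ∧²U. There exists an invertible element g of the even part of the Clifford algebra C(V,Q) such that: (i) g·τ(g) = 1, where τ is the main anti-involution (reversal) of C(V,Q); (ii) conjugation by g preserves the image ι(V) of V in C(V,Q); and (iii) m(g) ∈ End_k(∧U) is the operator of left exterior multiplication α ↦ exp(Θ) ∧ α, where exp(Θ) := Σ_{j=0}^{N} Θ^{∧j}/j!. In other words, exterior multiplication by exp(Θ) lies in the image of the spin group of (V,Q) under the spin representation. -/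
/-!
Embed `∧U` in `C(V,Q)` along the totally isotropic subspace `U ⊕ 0`; this is the map `j` with
`m ∘ j` equal to left exterior multiplication. Put `t := j Θ` and `g := exp t`, a finite sum
since `Θ` is nilpotent. As `Θ` is a sum of products of two orthogonal vectors, `t` is even and
`τ t = -t`, whence `τ g = exp (-t) = g⁻¹`. Moreover `t v - v t = j w` for some `w ∈ U`, and `j w`
commutes with `t`, so `g v g⁻¹ = v + j w` lies in `ι(V)`.
-/

open Module

open Finset

section TruncExp

variable {k A : Type*} [Field k] [Ring A] [Algebra k A]

variable (k) in
noncomputable def truncExp (n : ℕ) (a : A) : A :=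
  ∑ i ∈ range (n + 1), (i.factorial : k)⁻¹ • a ^ i

theorem truncExp_succ_of_pow_eq_zero {n : ℕ} {a : A} (h : a ^ (n + 1) = 0) :
    truncExp k (n + 1) a = truncExp k n a := by
  rw [truncExp, sum_range_succ, h, smul_zero, add_zero, truncExp]

theorem truncExp_mul_truncExp_neg [CharZero k] {n : ℕ} {a : A} (h : a ^ (n + 1) = 0) :
    truncExp k n a * truncExp k n (-a) = 1 := by
  let _ : Module ℚ A := Module.compHom A (algebraMap ℚ k)
  have hexp : ∀ b : A, b ^ (n + 1) = 0 → IsNilpotent.exp b = truncExp k n b := fun b hb => by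
    rw [IsNilpotent.exp_eq_sum hb, truncExp]
    refine sum_congr rfl fun i _ => ?_
    change algebraMap ℚ k (i.factorial : ℚ)⁻¹ • b ^ i = _
    rw [map_inv₀, map_natCast]
  rw [← hexp a h, ← hexp (-a) (by rw [neg_pow, h, mul_zero])]
  exact IsNilpotent.exp_mul_exp_neg_self ⟨_, h⟩

theorem pow_succ_mul_eq_of_mul_eq_add {a x y : A} (hx : a * x = x * a + y) (hy : Commute a y)
    (i : ℕ) : a ^ (i + 1) * x = x * a ^ (i + 1) + (i + 1) • (y * a ^ i) := by
  induction i with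
  | zero => simpa using hx
  | succ i ih =>
    rw [pow_succ', mul_assoc, ih, mul_add, ← mul_assoc, hx, mul_smul_comm, ← mul_assoc,
      hy.eq, add_mul, mul_assoc, mul_assoc, ← pow_succ', ← pow_succ', succ_nsmul _ (i + 1)]
    abel

theorem truncExp_mul_eq_of_mul_eq_add [CharZero k] {n : ℕ} {a x y : A} (ha : a ^ (n + 1) = 0)
    (hx : a * x = x * a + y) (hy : Commute a y) :
    truncExp k n a * x = (x + y) * truncExp k n a := by
  have hterm : ∀ i : ℕ, ((i + 1).factorial : k)⁻¹ • (a ^ (i + 1) * x) =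
      ((i + 1).factorial : k)⁻¹ • (x * a ^ (i + 1)) + (i.factorial : k)⁻¹ • (y * a ^ i) := by
    intro i
    have hc : ((i + 1).factorial : k)⁻¹ * ((i + 1 : ℕ) : k) = (i.factorial : k)⁻¹ := by
      rw [Nat.factorial_succ, Nat.cast_mul, mul_inv, mul_comm, ← mul_assoc,
        mul_inv_cancel₀ (Nat.cast_ne_zero.mpr i.succ_ne_zero), one_mul]
    rw [pow_succ_mul_eq_of_mul_eq_add hx hy, smul_add, ← Nat.cast_smul_eq_nsmul k,
      smul_smul, hc]
  calc truncExp k n a * x = truncExp k (n + 1) a * x := by rw [truncExp_succ_of_pow_eq_zero ha]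
    _ = x * truncExp k (n + 1) a + y * truncExp k n a := by
      simp only [truncExp, sum_mul, mul_sum, smul_mul_assoc, mul_smul_comm]
      rw [sum_range_succ', sum_range_succ' (fun i => _ • (x * a ^ i))]
      simp only [hterm, sum_add_distrib, Nat.factorial_zero, Nat.cast_one, inv_one, one_smul,
        pow_zero, one_mul, mul_one]
      abel
    _ = (x + y) * truncExp k n a := by rw [truncExp_succ_of_pow_eq_zero ha, add_mul]

theorem map_truncExp {B F : Type*} [Ring B] [Algebra k B] [FunLike F A B] [AlgHomClass F k A B]
    (f : F) (n : ℕ) (a : A) : f (truncExp k n a) = truncExp k n (f a) := by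
  simp only [truncExp, map_sum, map_smul, map_pow]

theorem truncExp_mem {S : Subalgebra k A} {a : A} (ha : a ∈ S) (n : ℕ) : truncExp k n a ∈ S :=
  sum_mem fun i _ => S.smul_mem (pow_mem ha i) _

end TruncExp

namespace CliffordAlgebra

theorem reverse_truncExp {k M : Type*} [Field k] [AddCommGroup M] [Module k M]
    {Q : QuadraticForm k M} (n : ℕ) (x : CliffordAlgebra Q) :
    reverse (truncExp k n x) = truncExp k n (reverse x) := by
  simp only [truncExp, map_sum, map_smul, ← unop_reverseOp, map_pow, MulOpposite.unop_pow]

variable {R M : Type*} [CommRing R] [AddCommGroup M] [Module R M] {Q : QuadraticForm R M}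

theorem ι_mul_ι_mul_ι_eq_add (a b v : M) :
    ι Q a * ι Q b * ι Q v = ι Q v * (ι Q a * ι Q b) +
      ι Q (QuadraticMap.polar Q b v • a - QuadraticMap.polar Q a v • b) := by
  rw [mul_assoc, ι_mul_ι_comm b, mul_sub, ← mul_assoc, ι_mul_ι_comm a, sub_mul, mul_assoc]
  simp only [map_sub, map_smul, Algebra.smul_def, Algebra.commutes]
  abel

variable {U : Type*} [AddCommGroup U] [Module R U] (f : (0 : QuadraticForm R U) →qᵢ Q)

theorem polar_isometry_zero (u u' : U) : QuadraticMap.polar Q (f u) (f u') = 0 := by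
  simp [QuadraticMap.polar, ← map_add, f.map_app]

variable {Θ : ExteriorAlgebra R U}
  (hΘ : Θ ∈ LinearMap.range (ExteriorAlgebra.ι R : U →ₗ[R] ExteriorAlgebra R U) ^ 2)
include hΘ

theorem map_mem_even : map f Θ ∈ even Q := by
  rw [pow_two] at hΘ
  refine Submodule.mul_induction_on hΘ ?_ fun _ _ hx hy => by rw [map_add]; exact add_mem hx hy
  rintro _ ⟨u, rfl⟩ _ ⟨u', rfl⟩
  rw [map_mul, map_apply_ι, map_apply_ι, ← Subalgebra.mem_toSubmodule, even_toSubmodule]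
  exact ι_mul_ι_mem_evenOdd_zero Q _ _

theorem reverse_map_eq_neg : reverse (map f Θ) = -map f Θ := by
  rw [pow_two] at hΘ
  refine Submodule.mul_induction_on hΘ ?_ fun _ _ hx hy => by rw [map_add, map_add, hx, hy, neg_add]
  rintro _ ⟨u, rfl⟩ _ ⟨u', rfl⟩
  rw [map_mul, map_apply_ι, map_apply_ι, reverse.map_mul, reverse_ι, reverse_ι]
  rw [ι_mul_ι_comm, polar_isometry_zero, map_zero, zero_sub]

theorem exists_map_mul_ι_eq (v : M) : ∃ w : U, map f Θ * ι Q v = ι Q v * map f Θ + ι Q (f w) := by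
  rw [pow_two] at hΘ
  refine Submodule.mul_induction_on hΘ ?_ ?_
  · rintro _ ⟨u, rfl⟩ _ ⟨u', rfl⟩
    refine ⟨QuadraticMap.polar Q (f u') v • u - QuadraticMap.polar Q (f u) v • u', ?_⟩
    rw [map_mul, map_apply_ι, map_apply_ι, ι_mul_ι_mul_ι_eq_add]
    simp only [map_sub, map_smul]
  · rintro x y ⟨w, hw⟩ ⟨w', hw'⟩
    refine ⟨w + w', ?_⟩
    rw [map_add, add_mul, hw, hw', mul_add, map_add, map_add]
    abel

theorem commute_map_ι (u : U) : Commute (map f Θ) (ι Q (f u)) := by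
  rw [pow_two] at hΘ
  refine Submodule.mul_induction_on hΘ ?_ fun _ _ hx hy => by rw [map_add]; exact hx.add_left hy
  rintro _ ⟨u₁, rfl⟩ _ ⟨u₂, rfl⟩
  rw [map_mul, map_apply_ι, map_apply_ι, Commute, SemiconjBy, ι_mul_ι_mul_ι_eq_add,
    polar_isometry_zero, polar_isometry_zero, zero_smul, zero_smul, sub_zero, map_zero, add_zero]

end CliffordAlgebra

namespace ExteriorAlgebra

variable {k U : Type*} [Field k] [AddCommGroup U] [Module k U] [FiniteDimensional k U]

theorem eq_zero_of_mem_range_ι_pow {m : ℕ} (hm : finrank k U < m) {x : ExteriorAlgebra k U}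
    (hx : x ∈ LinearMap.range (ι k : U →ₗ[k] ExteriorAlgebra k U) ^ m) : x = 0 := by
  have hbot : ⋀[k]^m U = ⊥ := by
    rw [← Submodule.finrank_eq_zero, exteriorPower.finrank_eq, Nat.choose_eq_zero_of_lt hm]
  exact (Submodule.mem_bot k).mp (hbot ▸ hx)

theorem pow_finrank_succ_eq_zero {Θ : ExteriorAlgebra k U}
    (hΘ : Θ ∈ LinearMap.range (ι k : U →ₗ[k] ExteriorAlgebra k U) ^ 2) :
    Θ ^ (finrank k U + 1) = 0 :=
  eq_zero_of_mem_range_ι_pow (m := 2 * (finrank k U + 1)) (by omega)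
    (by rw [pow_mul]; exact Submodule.pow_mem_pow _ hΘ _)

end ExteriorAlgebra

section Hyperbolic

variable (k U : Type*) [Field k] [AddCommGroup U] [Module k U]

noncomputable def inlIsometry : (0 : QuadraticForm k U) →qᵢ hypQ k U where
  toLinearMap := LinearMap.inl k U (Dual k U)
  map_app' u := by simp [hypQ, auxBilin]

variable {k U}

theorem comp_map_inlIsometry
    (φ : CliffordAlgebra (hypQ k U) →ₐ[k] Module.End k (ExteriorAlgebra k U))
    (hφ : ∀ v : U × Module.Dual k U, φ (CliffordAlgebra.ι (hypQ k U) v) = mOp k U v) :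
    φ.comp (CliffordAlgebra.map (inlIsometry k U)) = Algebra.lmul k (ExteriorAlgebra k U) := by
  refine CliffordAlgebra.hom_ext (LinearMap.ext fun u => ?_)
  simp only [LinearMap.comp_apply, AlgHom.toLinearMap_apply, AlgHom.comp_apply,
    CliffordAlgebra.map_apply_ι, hφ]
  change mOp k U (u, 0) = LinearMap.mulLeft k (ExteriorAlgebra.ι k u)
  rw [mOp, map_zero, add_zero]

end Hyperbolic

/-- for `Θ ∈ ∧²U` there is an invertible element `g` of the even part of the
Clifford algebra `C(V,Q)` with `g·τ(g) = 1`, whose conjugation action preserves `ι(V)`, and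
with `m(g)` equal to left exterior multiplication by `exp(Θ)`; i.e. exterior multiplication
by `exp(Θ)` lies in the image of the spin group under the spin representation. -/
theorem stmt7 (k : Type*) [Field k] [CharZero k] (U : Type*) [AddCommGroup U] [Module k U]
    [FiniteDimensional k U]
    (φ : CliffordAlgebra (hypQ k U) →ₐ[k] Module.End k (ExteriorAlgebra k U))
    (hφ : ∀ v : U × Module.Dual k U, φ (CliffordAlgebra.ι (hypQ k U) v) = mOp k U v)
    (Θ : ExteriorAlgebra k U)
    (hΘ : Θ ∈ (LinearMap.range (ExteriorAlgebra.ι k : U →ₗ[k] ExteriorAlgebra k U)) ^ 2) :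
    ∃ g : (CliffordAlgebra (hypQ k U))ˣ,
      (g : CliffordAlgebra (hypQ k U)) ∈ CliffordAlgebra.evenOdd (hypQ k U) 0
      ∧ (g : CliffordAlgebra (hypQ k U)) *
          CliffordAlgebra.reverse (g : CliffordAlgebra (hypQ k U)) = 1
      ∧ (∀ v : U × Module.Dual k U, ∃ v' : U × Module.Dual k U,
          (g : CliffordAlgebra (hypQ k U)) * CliffordAlgebra.ι (hypQ k U) v *
            ((g⁻¹ : _ˣ) : CliffordAlgebra (hypQ k U)) = CliffordAlgebra.ι (hypQ k U) v')
      ∧ φ (g : CliffordAlgebra (hypQ k U)) =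
          LinearMap.mulLeft k
            (∑ j ∈ Finset.range (Module.finrank k U + 1), (j.factorial : k)⁻¹ • Θ ^ j) := by
  set j := CliffordAlgebra.map (inlIsometry k U)
  set t := j Θ
  have ht : t ^ (finrank k U + 1) = 0 := by
    rw [← map_pow, ExteriorAlgebra.pow_finrank_succ_eq_zero hΘ, map_zero]
  have hnt : (-t) ^ (finrank k U + 1) = 0 := by rw [neg_pow, ht, mul_zero]
  refine ⟨⟨truncExp k (finrank k U) t, truncExp k (finrank k U) (-t),
    truncExp_mul_truncExp_neg ht, by simpa using truncExp_mul_truncExp_neg hnt⟩, ?_, ?_, ?_, ?_⟩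
  · rw [← CliffordAlgebra.even_toSubmodule]
    exact truncExp_mem (CliffordAlgebra.map_mem_even _ hΘ) _
  · change truncExp k _ t * CliffordAlgebra.reverse (truncExp k _ t) = 1
    rw [CliffordAlgebra.reverse_truncExp, CliffordAlgebra.reverse_map_eq_neg _ hΘ]
    exact truncExp_mul_truncExp_neg ht
  · intro v
    obtain ⟨w, hw⟩ := CliffordAlgebra.exists_map_mul_ι_eq _ hΘ v
    refine ⟨v + inlIsometry k U w, ?_⟩
    rw [Units.inv_mk, truncExp_mul_eq_of_mul_eq_add ht hw
      (CliffordAlgebra.commute_map_ι _ hΘ w), mul_assoc, truncExp_mul_truncExp_neg ht, mul_one,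
      map_add]
  · change φ (truncExp k _ (j Θ)) = _
    rw [← map_truncExp, ← AlgHom.comp_apply, comp_map_inlIsometry φ hφ]
    rfl
end

section
/- Assume W ⊆ V_K is a K-subspace which is isotropic for b_K and satisfies W ∩ σ(W) = 0 and W + σ(W) = V_K, and let η : K → End_F(V) be the F-algebra embedding determined by W (η_t acts as multiplication by t on W and by ι(t) on σ(W), and preserves V = 1⊗V). Then for all t ∈ K and all x, y ∈ V one has b(η_t(x), y) = b(x, η_{ι(t)}(y)); that is, η_{ι(t)} is the adjoint of η_t with respect to b. -/
open scoped TensorProduct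

/-- The `ι`-semilinear automorphism `σ := ι ⊗ id_V` of `V_K = K ⊗[F] V`. -/
noncomputable def sigmaMap (F : Type*) [Field F] (K : Type*) [Field K] [Algebra F K]
    (V : Type*) [AddCommGroup V] [Module F V] (ι : K ≃ₐ[F] K) :
    K ⊗[F] V →ₗ[F] K ⊗[F] V :=
  TensorProduct.map ι.toLinearMap LinearMap.id

/-
The automorphisms of a quadratic extension form a group of order at most 2, so every one of
them is an involution.
-/
theorem AlgEquiv.apply_apply_of_finrank_eq_two {F K : Type*} [Field F] [Field K] [Algebra F K]
    (hdim : Module.finrank F K = 2) (ι : K ≃ₐ[F] K) (z : K) : ι (ι z) = z := by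
  have : FiniteDimensional F K := Module.finite_of_finrank_eq_succ hdim
  have hcard : Fintype.card (K ≃ₐ[F] K) ∣ 2 := by
    have hle : Fintype.card (K ≃ₐ[F] K) ≤ 2 := hdim ▸ AlgEquiv.card_le
    have hpos : 0 < Fintype.card (K ≃ₐ[F] K) := Fintype.card_pos
    interval_cases Fintype.card (K ≃ₐ[F] K) <;> norm_num
  have hsq : ι ^ 2 = 1 := orderOf_dvd_iff_pow_eq_one.mp (orderOf_dvd_card.trans hcard)
  exact DFunLike.congr_fun hsq z

section

variable {F K V : Type*} [Field F] [Field K] [Algebra F K] [AddCommGroup V] [Module F V]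

@[simp]
theorem sigmaMap_tmul (ι : K ≃ₐ[F] K) (c : K) (v : V) :
    sigmaMap F K V ι (c ⊗ₜ[F] v) = ι c ⊗ₜ[F] v := by
  simp [sigmaMap]

theorem apply_sigmaMap_sigmaMap (ι : K ≃ₐ[F] K) (b : V →ₗ[F] V →ₗ[F] F)
    (bK : K ⊗[F] V →ₗ[K] K ⊗[F] V →ₗ[K] K)
    (hbK : ∀ (x y : K) (v w : V),
      bK (x ⊗ₜ[F] v) (y ⊗ₜ[F] w) = x * y * algebraMap F K (b v w))
    (p q : K ⊗[F] V) :
    bK (sigmaMap F K V ι p) (sigmaMap F K V ι q) = ι (bK p q) := by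
  induction p using TensorProduct.induction_on with
  | zero => simp
  | add p₁ p₂ h₁ h₂ => simp only [map_add, LinearMap.add_apply, h₁, h₂]
  | tmul c v =>
    induction q using TensorProduct.induction_on with
    | zero => simp
    | add q₁ q₂ hq₁ hq₂ => simp only [map_add, hq₁, hq₂]
    | tmul d w => simp [hbK, ι.commutes]

theorem exists_eq_add_sigmaMap_of_sup_eq_top (ι : K ≃ₐ[F] K) {W : Submodule K (K ⊗[F] V)}
    (hW : (W.restrictScalars F) ⊔ (W.restrictScalars F).map (sigmaMap F K V ι) = ⊤)
    (p : K ⊗[F] V) : ∃ w ∈ W, ∃ u ∈ W, p = w + sigmaMap F K V ι u := by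
  obtain ⟨w, hw, _, ⟨u, hu, rfl⟩, hsum⟩ :=
    Submodule.mem_sup.mp (hW ▸ Submodule.mem_top : p ∈ _ ⊔ _)
  exact ⟨w, hw, u, hu, hsum.symm⟩

/- Writing `p = w + σ u` and `q = w' + σ u'`, isotropy of `W` and `σ W` leaves only the cross
terms `b_K(w, σ u')` and `b_K(σ u, w')`, which both sides scale by `t` resp. `ι t`. -/
theorem apply_eta_eq_apply_eta_conj (ι : K ≃ₐ[F] K) (hι : ∀ z, ι (ι z) = z)
    (b : V →ₗ[F] V →ₗ[F] F) (bK : K ⊗[F] V →ₗ[K] K ⊗[F] V →ₗ[K] K)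
    (hbK : ∀ (x y : K) (v w : V),
      bK (x ⊗ₜ[F] v) (y ⊗ₜ[F] w) = x * y * algebraMap F K (b v w))
    (W : Submodule K (K ⊗[F] V)) (hWiso : ∀ w₁ ∈ W, ∀ w₂ ∈ W, bK w₁ w₂ = 0)
    (hW : (W.restrictScalars F) ⊔ (W.restrictScalars F).map (sigmaMap F K V ι) = ⊤)
    (η : K → Module.End F (K ⊗[F] V))
    (hη₁ : ∀ t : K, ∀ w ∈ W, η t w = t • w)
    (hη₂ : ∀ t : K, ∀ w ∈ W, η t (sigmaMap F K V ι w) = ι t • sigmaMap F K V ι w)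
    (t : K) (p q : K ⊗[F] V) : bK (η t p) q = bK p (η (ι t) q) := by
  obtain ⟨w, hw, u, hu, rfl⟩ := exists_eq_add_sigmaMap_of_sup_eq_top ι hW p
  obtain ⟨w', hw', u', hu', rfl⟩ := exists_eq_add_sigmaMap_of_sup_eq_top ι hW q
  have hww : bK w w' = 0 := hWiso w hw w' hw'
  have huu : bK (sigmaMap F K V ι u) (sigmaMap F K V ι u') = 0 := by
    rw [apply_sigmaMap_sigmaMap ι b bK hbK, hWiso u hu u' hu', map_zero]
  simp only [map_add, hη₁ _ _ hw, hη₁ _ _ hw', hη₂ _ _ hu, hη₂ _ _ hu', hι, map_smul,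
    LinearMap.add_apply, LinearMap.smul_apply, hww, huu, zero_add, add_zero,
    smul_eq_mul]
  ring

end

theorem stmt10_general (F : Type*) [Field F] (K : Type*) [Field K] [Algebra F K]
    (hdim : Module.finrank F K = 2) (ι : K ≃ₐ[F] K)
    (V : Type*) [AddCommGroup V] [Module F V]
    (b : V →ₗ[F] V →ₗ[F] F)
    (bK : K ⊗[F] V →ₗ[K] K ⊗[F] V →ₗ[K] K)
    (hbK : ∀ (x y : K) (v w : V),
      bK (x ⊗ₜ[F] v) (y ⊗ₜ[F] w) = x * y * algebraMap F K (b v w))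
    (W : Submodule K (K ⊗[F] V))
    (hWiso : ∀ w₁ ∈ W, ∀ w₂ ∈ W, bK w₁ w₂ = 0)
    (h2 : (W.restrictScalars F) ⊔ (W.restrictScalars F).map (sigmaMap F K V ι) = ⊤)
    (η : K → Module.End F (K ⊗[F] V))
    (hη1 : ∀ t : K, ∀ w ∈ W, η t w = t • w)
    (hη2 : ∀ t : K, ∀ w ∈ W, η t (sigmaMap F K V ι w) = ι t • sigmaMap F K V ι w) :
    ∀ (t : K) (x y : V),
      bK (η t ((1 : K) ⊗ₜ[F] x)) ((1 : K) ⊗ₜ[F] y)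
        = bK ((1 : K) ⊗ₜ[F] x) (η (ι t) ((1 : K) ⊗ₜ[F] y)) := fun t x y =>
  apply_eta_eq_apply_eta_conj ι (AlgEquiv.apply_apply_of_finrank_eq_two hdim ι) b bK hbK W
    hWiso h2 η hη1 hη2 t (1 ⊗ₜ x) (1 ⊗ₜ y)

/-- for all `t ∈ K` and `x, y ∈ V` one has `b(η_t(x), y) = b(x, η_{ι(t)}(y))`
(stated via the `K`-bilinear extension `b_K`, which restricts to `b` on `1 ⊗ V`). -/
theorem stmt10 (F : Type*) [Field F] [CharZero F] (K : Type*) [Field K] [Algebra F K]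
    (hdim : Module.finrank F K = 2) (ι : K ≃ₐ[F] K) (hι : ι ≠ AlgEquiv.refl)
    (V : Type*) [AddCommGroup V] [Module F V] [FiniteDimensional F V]
    (b : V →ₗ[F] V →ₗ[F] F) (hb : ∀ x y : V, b x y = b y x)
    (bK : K ⊗[F] V →ₗ[K] K ⊗[F] V →ₗ[K] K)
    (hbK : ∀ (x y : K) (v w : V),
      bK (x ⊗ₜ[F] v) (y ⊗ₜ[F] w) = x * y * algebraMap F K (b v w))
    (W : Submodule K (K ⊗[F] V))
    (hWiso : ∀ w₁ ∈ W, ∀ w₂ ∈ W, bK w₁ w₂ = 0)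
    (h1 : (W.restrictScalars F) ⊓ (W.restrictScalars F).map (sigmaMap F K V ι) = ⊥)
    (h2 : (W.restrictScalars F) ⊔ (W.restrictScalars F).map (sigmaMap F K V ι) = ⊤)
    (η : K → Module.End F (K ⊗[F] V))
    (hη1 : ∀ t : K, ∀ w ∈ W, η t w = t • w)
    (hη2 : ∀ t : K, ∀ w ∈ W, η t (sigmaMap F K V ι w) = ι t • sigmaMap F K V ι w)
    (hηV : ∀ t : K, ∀ v : V, ∃ v' : V, η t ((1 : K) ⊗ₜ[F] v) = (1 : K) ⊗ₜ[F] v') :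
    ∀ (t : K) (x y : V),
      bK (η t ((1 : K) ⊗ₜ[F] x)) ((1 : K) ⊗ₜ[F] y)
        = bK ((1 : K) ⊗ₜ[F] x) (η (ι t) ((1 : K) ⊗ₜ[F] y)) :=
  stmt10_general F K hdim ι V b bK hbK W hWiso h2 η hη1 hη2
end

section
/- Assume V ≠ 0, b is a nondegenerate symmetric F-bilinear form on V, and W ⊆ V_K is a K-subspace which is isotropic for b_K and satisfies W ⊕ σ(W) = V_K. Let L be a field, φ : K → L a field embedding, V_L := L ⊗_F V the base change of V along φ|_F : F → L with b_L the L-bilinear extension of b, and let W_φ ⊆ V_L be the L-span of the image of W under the map K ⊗_F V → L ⊗_F V sending x ⊗ v to φ(x) ⊗ v. Then W_φ is a maximal isotropic subspace of (V_L, b_L): b_L vanishes identically on W_φ × W_φ and dim_L W_φ = (dim_F V)/2. -/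
/-!
Setup: `F` a field of characteristic zero, `K/F` a quadratic extension with nontrivial
`F`-automorphism `ι`, `V` a finite-dimensional `F`-vector space, `V_K := K ⊗[F] V` with
`σ := ι ⊗ id`; `b` a nondegenerate symmetric `F`-bilinear form on `V` with `K`-bilinear
extension `b_K`; `W ⊆ V_K` a `b_K`-isotropic `K`-subspace with `V_K = W ⊕ σ(W)`.
`L` is a field containing `K` via an embedding `φ` (over `F`), `V_L := L ⊗[F] V` with the
`L`-bilinear extension `b_L` of `b`, and `W_φ ⊆ V_L` is the `L`-span of the image of `W`
under `x ⊗ v ↦ φ(x) ⊗ v`.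
-/

open scoped TensorProduct

/-!
Since `W ⊕ σ(W) = V_K` and `σ` is an `F`-linear bijection, `dim_F W = dim_F V_K / 2`, i.e.
`2 · dim_K W = dim_F V`. The map `ψ : x ⊗ v ↦ φ(x) ⊗ v` extends to an isomorphism
`L ⊗_K V_K ≅ V_L` carrying the base change `L ⊗_K W` onto `W_φ`, so `dim_L W_φ = dim_K W`
(base change along a field extension is injective). Isotropy is preserved because
`b_L (ψ a) (ψ c) = φ (b_K a c)`, and passes from a spanning set to its span by bilinearity.
-/

open Module Submodule

theorem LinearMap.apply_eq_zero_of_mem_span {R M N : Type*} [CommSemiring R] [AddCommMonoid M]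
    [AddCommMonoid N] [Module R M] [Module R N] {B : M →ₗ[R] M →ₗ[R] N} {s : Set M}
    (h : ∀ x ∈ s, ∀ y ∈ s, B x y = 0) :
    ∀ x ∈ span R s, ∀ y ∈ span R s, B x y = 0 := by
  have hleft : ∀ x ∈ s, ∀ y ∈ span R s, B x y = 0 := fun x hx =>
    span_le (p := ker (B x)) |>.2 (h x hx)
  intro x hx y hy
  exact span_le (p := ker (B.flip y)) |>.2 (fun x' hx' => hleft x' hx' y hy) hx

theorem Submodule.two_mul_finrank_of_isCompl_map {F M : Type*} [DivisionRing F] [AddCommGroup M]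
    [Module F M] [FiniteDimensional F M] {p : Submodule F M} {f : M →ₗ[F] M}
    (hf : Function.Injective f) (h : IsCompl p (p.map f)) :
    2 * finrank F p = finrank F M := by
  rw [← finrank_add_eq_of_isCompl h, (equivMapOfInjective f hf p).finrank_eq.symm, two_mul]

theorem Submodule.finrank_baseChange {K L M : Type*} [Field K] [Field L] [Algebra K L]
    [AddCommGroup M] [Module K M] (p : Submodule K M) :
    finrank L (p.baseChange L) = finrank K p := by
  have hinj : Function.Injective (p.subtype.baseChange L) := by
    rw [LinearMap.baseChange_eq_ltensor]
    exact Module.Flat.lTensor_preserves_injective_linearMap _ p.injective_subtype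
  rw [baseChange, LinearMap.finrank_range_of_inj hinj, Module.finrank_baseChange]

section
variable {F K L V : Type*} [Field F] [Field K] [Field L] [Algebra F K] [Algebra F L]
  [AddCommGroup V] [Module F V]

theorem sigmaMap_injective (ι : K ≃ₐ[F] K) : Function.Injective (sigmaMap F K V ι) :=
  (TensorProduct.congr ι.toLinearEquiv (LinearEquiv.refl F V)).injective

theorem two_mul_finrank_of_isCompl_sigmaMap [FiniteDimensional F K] [FiniteDimensional F V]
    (ι : K ≃ₐ[F] K) {W : Submodule K (K ⊗[F] V)}
    (hW : IsCompl (W.restrictScalars F) ((W.restrictScalars F).map (sigmaMap F K V ι))) :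
    2 * finrank K W = finrank F V := by
  have hF : 2 * finrank F (W.restrictScalars F) = finrank F K * finrank F V := by
    rw [two_mul_finrank_of_isCompl_map (sigmaMap_injective ι) hW, finrank_tensorProduct]
  have : Module.Free K W := .of_divisionRing K W
  have hK : finrank F (W.restrictScalars F) = finrank F K * finrank K W :=
    ((restrictScalarsEquiv F K _ W).restrictScalars F).finrank_eq.trans
      (finrank_mul_finrank F K W).symm
  rw [hK, mul_left_comm] at hF
  exact Nat.eq_of_mul_eq_mul_left finrank_pos hF

theorem map_algHom_apply_map_algHom {b : V →ₗ[F] V →ₗ[F] F}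
    {bK : K ⊗[F] V →ₗ[K] K ⊗[F] V →ₗ[K] K} {bL : L ⊗[F] V →ₗ[L] L ⊗[F] V →ₗ[L] L}
    (hbK : ∀ (x y : K) (v w : V), bK (x ⊗ₜ v) (y ⊗ₜ w) = x * y * algebraMap F K (b v w))
    (hbL : ∀ (x y : L) (v w : V), bL (x ⊗ₜ v) (y ⊗ₜ w) = x * y * algebraMap F L (b v w))
    (φ : K →ₐ[F] L) (a c : K ⊗[F] V) :
    bL (TensorProduct.map φ.toLinearMap LinearMap.id a)
      (TensorProduct.map φ.toLinearMap LinearMap.id c) = φ (bK a c) := by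
  induction a using TensorProduct.induction_on with
  | zero => simp
  | add a₁ a₂ h₁ h₂ => simp only [map_add, LinearMap.add_apply, h₁, h₂]
  | tmul x v =>
    induction c using TensorProduct.induction_on with
    | zero => simp
    | add c₁ c₂ h₁ h₂ => simp only [map_add, h₁, h₂]
    | tmul y w => simp [hbK, hbL]

section Tower
variable [Algebra K L] [IsScalarTower F K L]

theorem cancelBaseChange_one_tmul (x : K ⊗[F] V) :
    TensorProduct.AlgebraTensorModule.cancelBaseChange F K L L V (1 ⊗ₜ x) =
      TensorProduct.map (IsScalarTower.toAlgHom F K L).toLinearMap LinearMap.id x := by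
  induction x using TensorProduct.induction_on with
  | zero => simp
  | add x₁ x₂ h₁ h₂ => rw [TensorProduct.tmul_add, map_add, h₁, h₂, map_add]
  | tmul k v => simp [Algebra.smul_def]

theorem span_image_map_toAlgHom (W : Submodule K (K ⊗[F] V)) :
    span L (TensorProduct.map (IsScalarTower.toAlgHom F K L).toLinearMap LinearMap.id ''
      (W : Set (K ⊗[F] V))) =
      (W.baseChange L).map
        (TensorProduct.AlgebraTensorModule.cancelBaseChange F K L L V).toLinearMap := by
  rw [baseChange_eq_span, map_span, map_coe, ← Set.image_comp]
  congr 2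
  exact funext fun x => (cancelBaseChange_one_tmul x).symm

end Tower

theorem finrank_span_image_map_algHom (φ : K →ₐ[F] L) (W : Submodule K (K ⊗[F] V)) :
    finrank L (span L (TensorProduct.map φ.toLinearMap LinearMap.id '' (W : Set (K ⊗[F] V)))) =
      finrank K W := by
  let := φ.toAlgebra
  have : IsScalarTower F K L := .of_algebraMap_eq fun x => (φ.commutes x).symm
  calc _ = finrank L ((W.baseChange L).map
          (TensorProduct.AlgebraTensorModule.cancelBaseChange F K L L V).toLinearMap) :=
        congrArg (fun S : Submodule L (L ⊗[F] V) => finrank L S) (span_image_map_toAlgHom W)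
    _ = finrank K W := by rw [LinearEquiv.finrank_map_eq, Submodule.finrank_baseChange]

end

theorem stmt15_general (F : Type*) [Field F] (K : Type*) [Field K] [Algebra F K]
    (hdim : Module.finrank F K = 2) (ι : K ≃ₐ[F] K)
    (V : Type*) [AddCommGroup V] [Module F V] [FiniteDimensional F V]
    (b : V →ₗ[F] V →ₗ[F] F)
    (bK : K ⊗[F] V →ₗ[K] K ⊗[F] V →ₗ[K] K)
    (hbK : ∀ (x y : K) (v w : V),
      bK (x ⊗ₜ[F] v) (y ⊗ₜ[F] w) = x * y * algebraMap F K (b v w))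
    (W : Submodule K (K ⊗[F] V))
    (hWiso : ∀ w₁ ∈ W, ∀ w₂ ∈ W, bK w₁ w₂ = 0)
    (h1 : (W.restrictScalars F) ⊓ (W.restrictScalars F).map (sigmaMap F K V ι) = ⊥)
    (h2 : (W.restrictScalars F) ⊔ (W.restrictScalars F).map (sigmaMap F K V ι) = ⊤)
    (L : Type*) [Field L] [Algebra F L] (φ : K →ₐ[F] L)
    (bL : L ⊗[F] V →ₗ[L] L ⊗[F] V →ₗ[L] L)
    (hbL : ∀ (x y : L) (v w : V),
      bL (x ⊗ₜ[F] v) (y ⊗ₜ[F] w) = x * y * algebraMap F L (b v w)) :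
    let ψ : K ⊗[F] V →ₗ[F] L ⊗[F] V := TensorProduct.map φ.toLinearMap LinearMap.id
    let Wφ : Submodule L (L ⊗[F] V) := Submodule.span L (ψ '' (W : Set (K ⊗[F] V)))
    (∀ x ∈ Wφ, ∀ y ∈ Wφ, bL x y = 0)
    ∧ Module.finrank L Wφ = Module.finrank F V / 2 := by
  have : FiniteDimensional F K := Module.finite_of_finrank_eq_succ hdim
  have hW := two_mul_finrank_of_isCompl_sigmaMap ι ⟨disjoint_iff.2 h1, codisjoint_iff.2 h2⟩
  refine ⟨LinearMap.apply_eq_zero_of_mem_span ?_, ?_⟩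
  · rintro _ ⟨a, ha, rfl⟩ _ ⟨c, hc, rfl⟩
    rw [map_algHom_apply_map_algHom hbK hbL, hWiso a ha c hc, map_zero]
  · rw [finrank_span_image_map_algHom, ← hW]
    omega

/-- `W_φ` is a maximal isotropic subspace of `(V_L, b_L)`: `b_L` vanishes on
`W_φ × W_φ` and `dim_L W_φ = (dim_F V)/2`. -/
theorem stmt15 (F : Type*) [Field F] [CharZero F] (K : Type*) [Field K] [Algebra F K]
    (hdim : Module.finrank F K = 2) (ι : K ≃ₐ[F] K) (hι : ι ≠ AlgEquiv.refl)
    (V : Type*) [AddCommGroup V] [Module F V] [FiniteDimensional F V] [Nontrivial V]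
    (b : V →ₗ[F] V →ₗ[F] F) (hb : ∀ x y : V, b x y = b y x)
    (hbnd : ∀ x : V, (∀ y : V, b x y = 0) → x = 0)
    (bK : K ⊗[F] V →ₗ[K] K ⊗[F] V →ₗ[K] K)
    (hbK : ∀ (x y : K) (v w : V),
      bK (x ⊗ₜ[F] v) (y ⊗ₜ[F] w) = x * y * algebraMap F K (b v w))
    (W : Submodule K (K ⊗[F] V))
    (hWiso : ∀ w₁ ∈ W, ∀ w₂ ∈ W, bK w₁ w₂ = 0)
    (h1 : (W.restrictScalars F) ⊓ (W.restrictScalars F).map (sigmaMap F K V ι) = ⊥)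
    (h2 : (W.restrictScalars F) ⊔ (W.restrictScalars F).map (sigmaMap F K V ι) = ⊤)
    (L : Type*) [Field L] [Algebra F L] (φ : K →ₐ[F] L)
    (bL : L ⊗[F] V →ₗ[L] L ⊗[F] V →ₗ[L] L)
    (hbL : ∀ (x y : L) (v w : V),
      bL (x ⊗ₜ[F] v) (y ⊗ₜ[F] w) = x * y * algebraMap F L (b v w)) :
    let ψ : K ⊗[F] V →ₗ[F] L ⊗[F] V := TensorProduct.map φ.toLinearMap LinearMap.id
    let Wφ : Submodule L (L ⊗[F] V) := Submodule.span L (ψ '' (W : Set (K ⊗[F] V)))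
    (∀ x ∈ Wφ, ∀ y ∈ Wφ, bL x y = 0)
    ∧ Module.finrank L Wφ = Module.finrank F V / 2 :=
  stmt15_general F K hdim ι V b bK hbK W hWiso h1 h2 L φ bL hbL
end
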